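/- Let m ≥ 1 and 0 < λ ≤ 1/4, and let y : ℕ → ℝ satisfy y_0 = 0, y_i = λ·(y_{i−1} + y_{i+1}) for every i with 1 ≤ i ≤ m − 1, and y_m = λ·y_{m−1}. Then y_i = 0 for every i with 0 ≤ i ≤ m. -/

import Mathlib

/-!
Maximum principle: at an index where `|y i|` is largest, the equations bound `|y i|` by
`2λ` times that maximum, and `2λ ≤ 1/2 < 1` forces the maximum to vanish.
-/

theorem Finset.eq_zero_of_abs_le_mul_of_bound {ι : Type*} (s : Finset ι) (f : ι → ℝ) {c : ℝ}
    (hc : c < 1) (h : ∀ M, (∀ j ∈ s, |f j| ≤ M) → ∀ i ∈ s, |f i| ≤ c * M) :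
    ∀ i ∈ s, f i = 0 := by
  rcases s.eq_empty_or_nonempty with rfl | hs
  · simp
  obtain ⟨i₀, hi₀, hmax⟩ := s.exists_max_image (fun i => |f i|) hs
  have hM : |f i₀| ≤ c * |f i₀| := h _ hmax i₀ hi₀
  have hM0 : |f i₀| = 0 := by nlinarith [abs_nonneg (f i₀)]
  intro i hi
  exact abs_nonpos_iff.mp (hM0 ▸ hmax i hi)

theorem abs_le_two_mul_of_tridiagonal (m : ℕ) (lam : ℝ) (y : ℕ → ℝ) (hy0 : y 0 = 0)
    (hrec : ∀ i, 1 ≤ i → i ≤ m - 1 → y i = lam * (y (i - 1) + y (i + 1)))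
    (hlast : y m = lam * y (m - 1)) (M : ℝ) (hM : ∀ j ∈ Finset.Iic m, |y j| ≤ M) :
    ∀ i ∈ Finset.Iic m, |y i| ≤ 2 * |lam| * M := by
  simp only [Finset.mem_Iic] at hM ⊢
  have hM0 : 0 ≤ M := (abs_nonneg _).trans (hM 0 m.zero_le)
  intro i hi
  rcases Nat.eq_zero_or_pos i with rfl | hpos
  · rw [hy0, abs_zero]
    positivity
  rcases hi.eq_or_lt with rfl | hlt
  · calc |y i| = |lam| * |y (i - 1)| := by rw [hlast, abs_mul]
      _ ≤ |lam| * M := by gcongr; exact hM _ (Nat.sub_le _ _)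
      _ ≤ 2 * |lam| * M := by nlinarith [abs_nonneg lam]
  · calc |y i| = |lam| * |y (i - 1) + y (i + 1)| := by
          rw [hrec i hpos (Nat.le_sub_one_of_lt hlt), abs_mul]
      _ ≤ |lam| * (|y (i - 1)| + |y (i + 1)|) := by gcongr; exact abs_add_le _ _
      _ ≤ |lam| * (M + M) := by gcongr <;> apply hM <;> omega
      _ = 2 * |lam| * M := by ring

theorem tridiagonal_zero_solution_general
    (m : ℕ) (lam : ℝ) (hlam : 0 < lam) (hlam4 : lam ≤ 1 / 4)
    (y : ℕ → ℝ) (hy0 : y 0 = 0)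
    (hrec : ∀ i, 1 ≤ i → i ≤ m - 1 → y i = lam * (y (i - 1) + y (i + 1)))
    (hlast : y m = lam * y (m - 1)) :
    ∀ i, i ≤ m → y i = 0 := by
  have hc : 2 * |lam| < 1 := by rw [abs_of_pos hlam]; linarith
  intro i hi
  exact (Finset.Iic m).eq_zero_of_abs_le_mul_of_bound y hc
    (abs_le_two_mul_of_tridiagonal m lam y hy0 hrec hlast) i (Finset.mem_Iic.mpr hi)

/-- The tridiagonal system `y 0 = 0`, `y i = λ·(y (i-1) + y (i+1))` for `1 ≤ i ≤ m-1`,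
`y m = λ·y (m-1)` has only the zero solution. -/
theorem tridiagonal_zero_solution
    (m : ℕ) (hm : 1 ≤ m) (lam : ℝ) (hlam : 0 < lam) (hlam4 : lam ≤ 1 / 4)
    (y : ℕ → ℝ) (hy0 : y 0 = 0)
    (hrec : ∀ i, 1 ≤ i → i ≤ m - 1 → y i = lam * (y (i - 1) + y (i + 1)))
    (hlast : y m = lam * y (m - 1)) :
    ∀ i, i ≤ m → y i = 0 :=
  tridiagonal_zero_solution_general m lam hlam hlam4 y hy0 hrec hlast
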